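/- Let Γ = ⟨a, b | a² = b³ = (ab)^{p} = 1⟩ be the (2,3,p) triangle group with p ≥ 7. Then the commutator aba⁻¹b⁻¹ has infinite order in Γ. -/

import Mathlib

/-!
Send `a` and `b` to the classes in `PSL(2, ℝ)` of matrices `A, B ∈ SL(2, ℝ)` with traces `0`
and `1` and with `tr (A B) = 2 cos (π / p)`. By the Chebyshev recurrence, a matrix of
determinant one and trace `2 cos (π / q)` has `q`-th power `-1`, so this defines a representation
of the triangle group. The commutator goes to the class of `[A, B]`, whose trace is
`tr (A B) ^ 2 - 1`, which exceeds `2` exactly when `p ≥ 7`. The traces of the powers of such a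
matrix keep exceeding `2`, so no power of `[A, B]` is `±1`, i.e. central in `SL(2, ℝ)`.
-/

/-- The relations of the (2,3,p) triangle group `⟨a, b | a² = b³ = (ab)ᵖ = 1⟩`,
with `a` and `b` the two free generators. -/
def triangleRels23 (p : ℕ) : Set (FreeGroup (Fin 2)) :=
  {FreeGroup.of 0 ^ 2, FreeGroup.of 1 ^ 3, (FreeGroup.of 0 * FreeGroup.of 1) ^ p}

open Real
open scoped MatrixGroups

namespace Matrix

section CommRing

variable {R : Type*} [CommRing R]

theorem mul_self_eq_trace_smul_sub_det_smul (M : Matrix (Fin 2) (Fin 2) R) :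
    M * M = M.trace • M - M.det • 1 := by
  ext i j
  fin_cases i <;> fin_cases j <;>
    simp only [Fin.zero_eta, Fin.mk_one, mul_apply, Fin.sum_univ_two, trace_fin_two, det_fin_two,
      Matrix.sub_apply, Matrix.smul_apply, smul_eq_mul, one_apply_eq, one_apply_ne, ne_eq,
      zero_ne_one, one_ne_zero, not_false_eq_true] <;>
    ring

theorem pow_add_two_of_det_eq_one {M : Matrix (Fin 2) (Fin 2) R} (hM : M.det = 1) (n : ℕ) :
    M ^ (n + 2) = M.trace • M ^ (n + 1) - M ^ n := by
  rw [pow_add, sq, mul_self_eq_trace_smul_sub_det_smul, hM, one_smul, mul_sub, mul_smul_comm,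
    mul_one, pow_succ]

end CommRing

theorem two_lt_trace_pow_of_det_eq_one {R : Type*} [CommRing R] [LinearOrder R]
    [IsStrictOrderedRing R] {M : Matrix (Fin 2) (Fin 2) R} (hM : M.det = 1)
    (ht : 2 < M.trace) {n : ℕ} (hn : n ≠ 0) : 2 < (M ^ n).trace := by
  have increasing : ∀ k : ℕ, 2 ≤ (M ^ k).trace ∧ (M ^ k).trace < (M ^ (k + 1)).trace := by
    intro k
    induction k with
    | zero => simpa [trace_one] using ht
    | succ k ih =>
      obtain ⟨h₁, h₂⟩ := ih
      have hrec : (M ^ (k + 2)).trace = M.trace * (M ^ (k + 1)).trace - (M ^ k).trace := by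
        rw [pow_add_two_of_det_eq_one hM, trace_sub, trace_smul, smul_eq_mul]
      exact ⟨by linarith, by nlinarith⟩
  obtain ⟨k, rfl⟩ := Nat.exists_eq_succ_of_ne_zero hn
  obtain ⟨h₁, h₂⟩ := increasing k
  linarith

theorem sin_smul_pow_succ_of_trace_eq_two_cos {M : Matrix (Fin 2) (Fin 2) ℝ} {θ : ℝ}
    (hdet : M.det = 1) (htr : M.trace = 2 * cos θ) (n : ℕ) :
    sin θ • M ^ (n + 1) = sin ((n + 1) * θ) • M - sin (n * θ) • 1 := by
  induction n with
  | zero => simp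
  | succ n ih =>
    have hsq : M * M = (2 * cos θ) • M - 1 := by
      rw [mul_self_eq_trace_smul_sub_det_smul, hdet, htr, one_smul]
    have hsin : sin ((n + 1 + 1) * θ) = 2 * cos θ * sin ((n + 1) * θ) - sin (n * θ) := by
      rw [show (n + 1 + 1) * θ = (n + 1) * θ + θ by ring, show n * θ = (n + 1) * θ - θ by ring,
        sin_add, sin_sub]
      ring
    rw [pow_succ, ← smul_mul_assoc, ih, sub_mul, smul_mul_assoc, smul_mul_assoc, one_mul, hsq,
      Nat.cast_succ, hsin]
    module

theorem pow_eq_neg_one_of_trace_eq_two_cos_pi_div {M : Matrix (Fin 2) (Fin 2) ℝ} {p : ℕ}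
    (hp : 2 ≤ p) (hdet : M.det = 1) (htr : M.trace = 2 * cos (π / p)) : M ^ p = -1 := by
  have hsin : sin (π / p) ≠ 0 := by
    refine (sin_pos_of_pos_of_lt_pi (by positivity) ?_).ne'
    exact div_lt_self pi_pos (by exact_mod_cast hp)
  obtain ⟨q, rfl⟩ := Nat.exists_eq_add_of_le' (by omega : 1 ≤ p)
  have h := sin_smul_pow_succ_of_trace_eq_two_cos hdet htr q
  have hπ : ((q : ℝ) + 1) * (π / ↑(q + 1)) = π := by push_cast; field_simp
  have hπ' : (q : ℝ) * (π / ↑(q + 1)) = π - π / ↑(q + 1) := by linear_combination hπ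
  rw [hπ, hπ', sin_pi, sin_pi_sub, zero_smul, zero_sub, ← smul_neg] at h
  exact smul_right_injective _ hsin h

end Matrix

namespace Matrix.SpecialLinearGroup

variable {R : Type*} [CommRing R]

theorem mk_eq_one_of_coe_eq_neg_one {g : SL(2, R)} (hg : (g : Matrix (Fin 2) (Fin 2) R) = -1) :
    (g : PSL(2, R)) = 1 := by
  rw [QuotientGroup.eq_one_iff, mem_center_iff]
  exact ⟨-1, by norm_num, by rw [hg, map_neg, map_one]⟩

theorem mk_pow_eq_one_of_trace_eq_two_cos_pi_div {g : SL(2, ℝ)} {p : ℕ} (hp : 2 ≤ p)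
    (hg : (g : Matrix (Fin 2) (Fin 2) ℝ).trace = 2 * cos (π / p)) :
    (g : PSL(2, ℝ)) ^ p = 1 := by
  rw [← QuotientGroup.mk_pow]
  refine mk_eq_one_of_coe_eq_neg_one ?_
  rw [coe_pow]
  exact pow_eq_neg_one_of_trace_eq_two_cos_pi_div hp g.prop hg

theorem trace_le_two_of_mem_center [LinearOrder R] [IsStrictOrderedRing R] {g : SL(2, R)}
    (hg : g ∈ Subgroup.center SL(2, R)) : (g : Matrix (Fin 2) (Fin 2) R).trace ≤ 2 := by
  obtain ⟨r, hr, hrg⟩ := mem_center_iff.mp hg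
  rw [Fintype.card_fin] at hr
  rw [← hrg, scalar_apply, trace_diagonal, Fin.sum_univ_two]
  nlinarith [sq_nonneg (r - 1)]

theorem not_isOfFinOrder_mk_of_two_lt_trace [LinearOrder R] [IsStrictOrderedRing R]
    {g : SL(2, R)} (hg : 2 < (g : Matrix (Fin 2) (Fin 2) R).trace) :
    ¬ IsOfFinOrder (g : PSL(2, R)) := by
  intro h
  obtain ⟨n, hn, hpow⟩ := isOfFinOrder_iff_pow_eq_one.mp h
  rw [← QuotientGroup.mk_pow, QuotientGroup.eq_one_iff] at hpow
  have htr := trace_le_two_of_mem_center hpow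
  rw [coe_pow] at htr
  exact htr.not_gt (two_lt_trace_pow_of_det_eq_one g.prop hg hn.ne')

end Matrix.SpecialLinearGroup

theorem lift_eq_one_of_mem_triangleRels23 {G : Type*} [Group G] {p : ℕ} {x y : G}
    (hx : x ^ 2 = 1) (hy : y ^ 3 = 1) (hxy : (x * y) ^ p = 1) :
    ∀ r ∈ triangleRels23 p, FreeGroup.lift ![x, y] r = 1 := by
  rintro r (rfl | rfl | rfl) <;> simpa

theorem three_lt_sq_two_mul_cos_pi_div {p : ℕ} (hp : 6 < p) : 3 < (2 * cos (π / p)) ^ 2 := by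
  have hcos : cos (π / 6) < cos (π / p) :=
    cos_lt_cos_of_nonneg_of_le_pi (by positivity) (by linarith [pi_pos])
      (div_lt_div_of_pos_left pi_pos (by norm_num) (by exact_mod_cast hp))
  have hpos : 0 < cos (π / 6) := by rw [cos_pi_div_six]; positivity
  nlinarith [sq_cos_pi_div_six]

open Matrix

/-- `z ^ 2 - 1` is Fricke's `tr [A, B] = tr² A + tr² B + tr² (A B) - tr A tr B tr (A B) - 2`
at traces `0, 1, z`; the square root solves `det B = 1`. -/
theorem exists_SL2_pair_with_traces {z : ℝ} (hz : 3 ≤ z ^ 2) :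
    ∃ A B : SL(2, ℝ), (A : Matrix (Fin 2) (Fin 2) ℝ).trace = 0 ∧
      (B : Matrix (Fin 2) (Fin 2) ℝ).trace = 1 ∧
      (↑(A * B) : Matrix (Fin 2) (Fin 2) ℝ).trace = z ∧
      (↑(A * B * A⁻¹ * B⁻¹) : Matrix (Fin 2) (Fin 2) ℝ).trace = z ^ 2 - 1 := by
  set t := √(z ^ 2 - 3)
  have ht : t ^ 2 = z ^ 2 - 3 := sq_sqrt (by linarith)
  let A : Matrix (Fin 2) (Fin 2) ℝ := !![0, 1; -1, 0]
  let B : Matrix (Fin 2) (Fin 2) ℝ := !![1 / 2, (t - z) / 2; (t + z) / 2, 1 / 2]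
  have hA : A.det = 1 := by norm_num [A, det_fin_two_of]
  have hB : B.det = 1 := by
    simp only [B, det_fin_two_of]
    linear_combination -ht / 4
  refine ⟨⟨A, hA⟩, ⟨B, hB⟩, by norm_num [A, trace_fin_two_of], by norm_num [B, trace_fin_two_of],
    ?_, ?_⟩
  · show (A * B).trace = z
    simp only [A, B, mul_fin_two, trace_fin_two_of]
    ring
  · show (A * B * adjugate A * adjugate B).trace = z ^ 2 - 1
    simp only [A, B, adjugate_fin_two_of, mul_fin_two, trace_fin_two_of]
    linear_combination ht / 2

/-- In the (2,3,p) triangle group `Γ = ⟨a, b | a² = b³ = (ab)ᵖ = 1⟩` with `p ≥ 7`,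
the commutator `a b a⁻¹ b⁻¹` has infinite order. -/
theorem stmt15 (p : ℕ) (hp : 7 ≤ p) :
    let a : PresentedGroup (triangleRels23 p) := PresentedGroup.of 0
    let b : PresentedGroup (triangleRels23 p) := PresentedGroup.of 1
    ¬ IsOfFinOrder (a * b * a⁻¹ * b⁻¹) := by
  intro a b hfin
  have hz := three_lt_sq_two_mul_cos_pi_div hp
  obtain ⟨A, B, hA, hB, hAB, hC⟩ := exists_SL2_pair_with_traces hz.le
  have hrel := lift_eq_one_of_mem_triangleRels23
    (SpecialLinearGroup.mk_pow_eq_one_of_trace_eq_two_cos_pi_div (g := A) le_rfl (by simp [hA]))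
    (SpecialLinearGroup.mk_pow_eq_one_of_trace_eq_two_cos_pi_div (g := B) (by norm_num)
      (by simp [hB]))
    (SpecialLinearGroup.mk_pow_eq_one_of_trace_eq_two_cos_pi_div (by omega) hAB)
  set φ := PresentedGroup.toGroup hrel
  have hφ : φ (a * b * a⁻¹ * b⁻¹) = (↑(A * B * A⁻¹ * B⁻¹) : PSL(2, ℝ)) := by
    simp [φ, a, b, PresentedGroup.toGroup.of]
  refine SpecialLinearGroup.not_isOfFinOrder_mk_of_two_lt_trace ?_ (hφ ▸ φ.isOfFinOrder hfin)
  rw [hC]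
  linarith
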